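/- arXiv:2205.09060 — 4 statements merged into one kernel-verified Lean document; each statement's English description precedes it below -/
import Mathlib

section
/- Let F be a finite set of N players and v : Finset F → ℝ a value function with v(∅) = 0. Then the Shapley values satisfy Pareto optimality (efficiency): ∑_{i ∈ F} φ_v(i) = v(F). -/
/-!
Summing the Shapley values over all players and collecting terms by coalition, `v S` appears
with coefficient `|S| w(|S| - 1) - (N - |S|) w(|S|)`, where `w(k) = k! (N - k - 1)! / N!`.
Both products equal `1 / C(N, |S|)` unless their first factor vanishes, so the coefficient
telescopes to `[S = F] - [S = ∅]` and the sum is `v(F) - v(∅)`.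
-/

open Finset

/-- The Shapley value of player `i` in the coalitional game `(F, v)`:
`φ_v(i) = ∑_{A ⊆ F \ {i}} (|A|! · (N − |A| − 1)! / N!) · (v(A ∪ {i}) − v(A))`. -/
noncomputable def shapleyValue {F : Type*} [Fintype F] [DecidableEq F]
    (v : Finset F → ℝ) (i : F) : ℝ :=
  ∑ A ∈ (Finset.univ.erase i).powerset,
    ((A.card.factorial * (Fintype.card F - A.card - 1).factorial : ℝ) /
        (Fintype.card F).factorial) * (v (insert i A) - v A)

section DoubleCounting

variable {α M : Type*} [DecidableEq α] [AddCommMonoid M]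

theorem Finset.sum_sum_powerset_erase (s : Finset α) (f : Finset α → M) :
    ∑ i ∈ s, ∑ A ∈ (s.erase i).powerset, f A = ∑ A ∈ s.powerset, #(s \ A) • f A :=
  calc ∑ i ∈ s, ∑ A ∈ (s.erase i).powerset, f A
      = ∑ A ∈ s.powerset, ∑ i ∈ s \ A, f A := sum_comm' fun i A => by
        simp only [mem_powerset, subset_erase, mem_sdiff]
        tauto
    _ = ∑ A ∈ s.powerset, #(s \ A) • f A := by simp only [sum_const]

theorem Finset.sum_powerset_erase_insert {a : α} {s : Finset α} (ha : a ∈ s)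
    (g : Finset α → M) :
    ∑ A ∈ (s.erase a).powerset, g (insert a A) = ∑ S ∈ s.powerset with a ∈ S, g S := by
  refine sum_nbij' (insert a) (erase · a) ?_ ?_ ?_ ?_ fun _ _ => rfl
  · intro A hA
    simp only [mem_filter, mem_powerset, subset_erase] at hA ⊢
    exact ⟨insert_subset ha hA.1, mem_insert_self a A⟩
  · intro S hS
    simp only [mem_filter, mem_powerset] at hS ⊢
    exact erase_subset_erase a hS.1
  · intro A hA
    simp only [mem_powerset, subset_erase] at hA
    exact erase_insert hA.2
  · intro S hS
    simp only [mem_filter] at hS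
    exact insert_erase hS.2

theorem Finset.sum_sum_powerset_erase_insert (s : Finset α) (f : ℕ → Finset α → M) :
    ∑ i ∈ s, ∑ A ∈ (s.erase i).powerset, f #A (insert i A) =
      ∑ S ∈ s.powerset, #S • f (#S - 1) S :=
  calc ∑ i ∈ s, ∑ A ∈ (s.erase i).powerset, f #A (insert i A)
      = ∑ i ∈ s, ∑ S ∈ s.powerset with i ∈ S, f (#S - 1) S := by
        refine sum_congr rfl fun i hi => ?_
        rw [← sum_powerset_erase_insert hi]
        refine sum_congr rfl fun A hA => ?_
        rw [card_insert_of_notMem (subset_erase.1 (mem_powerset.1 hA)).2, Nat.add_sub_cancel]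
    _ = ∑ S ∈ s.powerset, ∑ i ∈ S, f (#S - 1) S := sum_comm' fun i S => by
        simp only [mem_filter, mem_powerset]
        exact ⟨fun h => ⟨h.2.2, h.2.1⟩, fun h => ⟨h.2 h.1, h.2, h.1⟩⟩
    _ = ∑ S ∈ s.powerset, #S • f (#S - 1) S := by simp only [sum_const]

end DoubleCounting

noncomputable def shapleyWeight (N k : ℕ) : ℝ :=
  (k.factorial * (N - k - 1).factorial : ℝ) / N.factorial

theorem shapleyValue_eq_sum_shapleyWeight {F : Type*} [Fintype F] [DecidableEq F]
    (v : Finset F → ℝ) (i : F) :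
    shapleyValue v i = ∑ A ∈ (univ.erase i).powerset,
      shapleyWeight (Fintype.card F) #A * (v (insert i A) - v A) :=
  rfl

theorem natCast_mul_shapleyWeight_pred {N k : ℕ} (hk0 : k ≠ 0) (hkN : k ≤ N) :
    k * shapleyWeight N (k - 1) = ((N.choose k : ℝ))⁻¹ := by
  rw [Nat.cast_choose ℝ hkN, inv_div, shapleyWeight, ← Nat.mul_factorial_pred hk0,
    show N - (k - 1) - 1 = N - k by omega]
  push_cast
  ring

theorem natCast_sub_mul_shapleyWeight {N k : ℕ} (hkN : k < N) :
    ((N - k : ℕ) : ℝ) * shapleyWeight N k = ((N.choose k : ℝ))⁻¹ := by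
  rw [Nat.cast_choose ℝ hkN.le, inv_div, shapleyWeight,
    ← Nat.mul_factorial_pred (n := N - k) (by omega), Nat.sub_sub]
  push_cast
  ring

theorem natCast_mul_shapleyWeight_pred_sub_natCast_sub_mul_shapleyWeight {N k : ℕ}
    (hkN : k ≤ N) :
    k * shapleyWeight N (k - 1) - ((N - k : ℕ) : ℝ) * shapleyWeight N k =
      (if k = N then 1 else 0) - (if k = 0 then 1 else 0) := by
  rcases Nat.eq_zero_or_pos k with rfl | hk0 <;> rcases hkN.lt_or_eq with hkN | rfl
  · simpa [hkN.ne] using natCast_sub_mul_shapleyWeight hkN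
  · simp
  · simp [natCast_mul_shapleyWeight_pred hk0.ne' hkN.le, natCast_sub_mul_shapleyWeight hkN,
      hkN.ne, hk0.ne']
  · simp [natCast_mul_shapleyWeight_pred hk0.ne' le_rfl, hk0.ne']

section Efficiency

variable {F : Type*} [Fintype F] [DecidableEq F]

theorem sum_shapleyValue_eq_sum_mul (v : Finset F → ℝ) :
    ∑ i, shapleyValue v i = ∑ S : Finset F,
      (#S * shapleyWeight (Fintype.card F) (#S - 1) -
        ((Fintype.card F - #S : ℕ) : ℝ) * shapleyWeight (Fintype.card F) #S) * v S := by
  simp only [shapleyValue_eq_sum_shapleyWeight, mul_sub, sum_sub_distrib]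
  rw [sum_sum_powerset_erase_insert univ fun k S => shapleyWeight (Fintype.card F) k * v S,
    sum_sum_powerset_erase univ fun A => shapleyWeight (Fintype.card F) #A * v A, powerset_univ,
    ← sum_sub_distrib]
  refine sum_congr rfl fun S _ => ?_
  rw [← compl_eq_univ_sdiff, card_compl, nsmul_eq_mul, nsmul_eq_mul]
  ring

theorem sum_shapleyValue (v : Finset F → ℝ) : ∑ i, shapleyValue v i = v univ - v ∅ := by
  rw [sum_shapleyValue_eq_sum_mul]
  simp only [natCast_mul_shapleyWeight_pred_sub_natCast_sub_mul_shapleyWeight (card_le_univ _),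
    card_eq_iff_eq_univ, card_eq_zero, sub_mul, ite_mul, one_mul, zero_mul, sum_sub_distrib,
    sum_ite_eq', mem_univ, if_true]

end Efficiency

theorem shapley_efficiency
    {F : Type*} [Fintype F] [DecidableEq F] (v : Finset F → ℝ)
    (h_empty : v ∅ = 0) :
    ∑ i, shapleyValue v i = v Finset.univ := by
  rw [sum_shapleyValue, h_empty, sub_zero]
end

section
/- Let F be a finite set of N players and v : Finset F → ℝ a value function. If two players i, j ∈ F are symmetric, i.e., v(A ∪ {i}) = v(A ∪ {j}) for every coalition A ⊆ F \ {i, j}, then they receive equal Shapley values: φ_v(i) = φ_v(j). -/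
open Finset

theorem shapley_symmetry
    {F : Type*} [Fintype F] [DecidableEq F] (v : Finset F → ℝ) (i j : F)
    (h_symm : ∀ A ⊆ (Finset.univ.erase i).erase j, v (insert i A) = v (insert j A)) :
    shapleyValue v i = shapleyValue v j := by
  rcases eq_or_ne i j with rfl | hij
  · rfl
  unfold shapleyValue
  refine Finset.sum_nbij' (fun A => A.image (Equiv.swap i j))
    (fun B => B.image (Equiv.swap i j)) ?_ ?_ ?_ ?_ ?_
  · intro A hA
    rw [mem_powerset, subset_erase] at hA ⊢
    refine ⟨subset_univ _, fun hjmem => ?_⟩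
    obtain ⟨y, hy, hyj⟩ := mem_image.mp hjmem
    have hyi : y = i := (Equiv.swap i j).injective (by rw [hyj, Equiv.swap_apply_left])
    exact hA.2 (hyi ▸ hy)
  · intro B hB
    rw [mem_powerset, subset_erase] at hB ⊢
    refine ⟨subset_univ _, fun himem => ?_⟩
    obtain ⟨y, hy, hyi⟩ := mem_image.mp himem
    have hyj : y = j := (Equiv.swap i j).injective (by rw [hyi, Equiv.swap_apply_right])
    exact hB.2 (hyj ▸ hy)
  · intro A _
    simp [Finset.image_image, Function.comp_def]
  · intro B _
    simp [Finset.image_image, Function.comp_def]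
  · intro A hA
    rw [mem_powerset, subset_erase] at hA
    have hiA : i ∉ A := hA.2
    show _ = ((((A.image (Equiv.swap i j)).card.factorial *
        (Fintype.card F - (A.image (Equiv.swap i j)).card - 1).factorial : ℝ) /
        (Fintype.card F).factorial) *
        (v (insert j (A.image (Equiv.swap i j))) - v (A.image (Equiv.swap i j))))
    have hcard : (A.image (Equiv.swap i j)).card = A.card :=
      Finset.card_image_of_injective _ (Equiv.injective _)
    rw [hcard]
    congr 1
    by_cases hj : j ∈ A
    · have hsub : A.erase j ⊆ (Finset.univ.erase i).erase j :=
        fun x hx => mem_erase.mpr ⟨(mem_erase.mp hx).1,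
          mem_erase.mpr ⟨fun h => hiA (h ▸ hx |> mem_of_mem_erase), mem_univ x⟩⟩
      have himg : A.image (Equiv.swap i j) = insert i (A.erase j) := by
        ext x
        simp only [mem_image, mem_insert, mem_erase]
        constructor
        · rintro ⟨y, hy, rfl⟩
          rcases eq_or_ne y j with h | hyj
          · left; rw [h, Equiv.swap_apply_right]
          · have hyi : y ≠ i := fun h => hiA (h ▸ hy)
            right
            rw [Equiv.swap_apply_of_ne_of_ne hyi hyj]
            exact ⟨hyj, hy⟩
        · rintro (h | ⟨hxj, hx⟩)
          · exact ⟨j, hj, by rw [Equiv.swap_apply_right, h]⟩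
          · have hxi : x ≠ i := fun h => hiA (h ▸ hx)
            exact ⟨x, hx, Equiv.swap_apply_of_ne_of_ne hxi hxj⟩
      have hAeq : A = insert j (A.erase j) := (Finset.insert_erase hj).symm
      rw [himg]
      rw [show insert i A = insert i (insert j (A.erase j)) by rw [← hAeq]]
      rw [show insert j (insert i (A.erase j)) = insert i (insert j (A.erase j)) from
        Finset.insert_comm j i _]
      rw [show v (insert i (A.erase j)) = v (insert j (A.erase j)) from h_symm _ hsub]
      rw [← hAeq]
    · have hsub : A ⊆ (Finset.univ.erase i).erase j :=
        fun x hx => mem_erase.mpr ⟨fun h => hj (h ▸ hx),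
          mem_erase.mpr ⟨fun h => hiA (h ▸ hx), mem_univ x⟩⟩
      have himg : A.image (Equiv.swap i j) = A := by
        apply (Finset.image_congr ?_).trans Finset.image_id
        intro x hx
        exact Equiv.swap_apply_of_ne_of_ne (fun h => hiA (h ▸ hx)) (fun h => hj (h ▸ hx))
      rw [himg, h_symm A hsub]
end

section
/- Let Ω be a finite sample space with probability mass function p, let F = {X_1, …, X_N} be random variables on Ω taking values in finite sets, and let the value function be total correlation, v(A) = C(A). Then for every variable X_i, the Shapley value φ(X_i) = ∑_{A ⊆ F \ {X_i}} (1 / (N · binom(N−1, |A|))) · (H(A) + H(X_i) − H(A ∪ {X_i})) is nonnegative, and φ(X_i) = 0 if and only if H(A) + H(X_i) = H(A ∪ {X_i}) for every subset A ⊆ F \ {X_i}. -/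
open Finset

variable {Ω : Type*} [Fintype Ω] {N : ℕ} {V : Fin N → Type*}
  [∀ i, Fintype (V i)] [∀ i, DecidableEq (V i)]

/-- The joint probability mass function of the subset `A` of the variables `X i`:
`p_A(x) = P(∀ i ∈ A, X i = x i)`, computed with respect to the mass function `p` on `Ω`. -/
noncomputable def jointPMF (p : Ω → ℝ) (X : ∀ i, Ω → V i) (A : Finset (Fin N))
    (x : ∀ i : {j // j ∈ A}, V i.1) : ℝ :=
  ∑ ω ∈ Finset.univ.filter (fun ω => ∀ i : {j // j ∈ A}, X i.1 ω = x i), p ω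

/-- The joint Shannon entropy `H(A) = −∑_x p_A(x) log p_A(x)` of the subset `A`
of the variables `X i`. -/
noncomputable def jointEntropy (p : Ω → ℝ) (X : ∀ i, Ω → V i) (A : Finset (Fin N)) : ℝ :=
  -∑ x : (∀ i : {j // j ∈ A}, V i.1), jointPMF p X A x * Real.log (jointPMF p X A x)

/-- The total correlation `C(A) = ∑_{i ∈ A} H(X i) − H(A)` of the subset `A`
of the variables `X i`. -/
noncomputable def totalCorrelation (p : Ω → ℝ) (X : ∀ i, Ω → V i) (A : Finset (Fin N)) : ℝ :=
  (∑ i ∈ A, jointEntropy p X {i}) - jointEntropy p X A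

/-- The Shapley value of the variable `X i` in the game whose value function is the
total correlation:
`φ(X i) = ∑_{A ⊆ F \ {X i}} (1/(N·binom(N−1,|A|))) · (H(A) + H(X i) − H(A ∪ {X i}))`. -/
noncomputable def shapleyTC (p : Ω → ℝ) (X : ∀ i, Ω → V i) (i : Fin N) : ℝ :=
  ∑ A ∈ (Finset.univ.erase i).powerset,
    ((1 : ℝ) / (N * (N - 1).choose A.card)) *
      (jointEntropy p X A + jointEntropy p X {i} - jointEntropy p X (insert i A))

set_option linter.unusedSectionVars false

/-- evaluation map -/
def resMap (X : ∀ i, Ω → V i) (A : Finset (Fin N)) (ω : Ω) : ∀ i : {j // j ∈ A}, V i.1 :=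
  fun i => X i.1 ω

lemma filter_eq_resMap (p : Ω → ℝ) (X : ∀ i, Ω → V i) (A : Finset (Fin N))
    (x : ∀ i : {j // j ∈ A}, V i.1) :
    jointPMF p X A x = ∑ ω ∈ Finset.univ.filter (fun ω => resMap X A ω = x), p ω := by
  unfold jointPMF
  congr 1
  apply Finset.filter_congr
  intro ω _
  simp [resMap, funext_iff]

lemma jointPMF_nonneg (p : Ω → ℝ) (hp : ∀ ω, 0 ≤ p ω) (X : ∀ i, Ω → V i) (A : Finset (Fin N))
    (x : ∀ i : {j // j ∈ A}, V i.1) : 0 ≤ jointPMF p X A x :=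
  Finset.sum_nonneg fun ω _ => hp ω

lemma le_jointPMF (p : Ω → ℝ) (hp : ∀ ω, 0 ≤ p ω) (X : ∀ i, Ω → V i) (A : Finset (Fin N))
    (ω : Ω) : p ω ≤ jointPMF p X A (resMap X A ω) := by
  rw [filter_eq_resMap]
  exact Finset.single_le_sum (fun ω _ => hp ω) (by simp)

lemma jointPMF_sum_one (p : Ω → ℝ) (hp1 : ∑ ω, p ω = 1) (X : ∀ i, Ω → V i)
    (A : Finset (Fin N)) : ∑ x, jointPMF p X A x = 1 := by
  simp_rw [filter_eq_resMap]
  rw [Finset.sum_fiberwise Finset.univ (resMap X A) p]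
  exact hp1

lemma jointEntropy_eq (p : Ω → ℝ) (X : ∀ i, Ω → V i) (A : Finset (Fin N)) :
    jointEntropy p X A = -∑ ω, p ω * Real.log (jointPMF p X A (resMap X A ω)) := by
  unfold jointEntropy
  congr 1
  rw [← Finset.sum_fiberwise Finset.univ (resMap X A)
    (fun ω => p ω * Real.log (jointPMF p X A (resMap X A ω)))]
  refine Finset.sum_congr rfl fun x _ => ?_
  rw [filter_eq_resMap, Finset.sum_mul]
  refine Finset.sum_congr rfl fun ω hω => ?_
  rw [(Finset.mem_filter.mp hω).2, ← filter_eq_resMap]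

lemma jointEntropy_subadd (p : Ω → ℝ) (hp : ∀ ω, 0 ≤ p ω) (hp1 : ∑ ω, p ω = 1)
    (X : ∀ i, Ω → V i) (i : Fin N) (A : Finset (Fin N)) (hiA : i ∉ A) :
    jointEntropy p X (insert i A) ≤ jointEntropy p X A + jointEntropy p X {i} := by
  classical
  set B := insert i A with hB
  have hAB : A ⊆ B := Finset.subset_insert i A
  have hiB : ({i} : Finset (Fin N)) ⊆ B := by
    intro j hj; rw [Finset.mem_singleton] at hj; rw [hj]; exact Finset.mem_insert_self i A
  set rA : (∀ j : {k // k ∈ B}, V j.1) → (∀ j : {k // k ∈ A}, V j.1) :=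
    fun z j => z ⟨j.1, hAB j.2⟩ with hrA
  set rI : (∀ j : {k // k ∈ B}, V j.1) → (∀ j : {k // k ∈ ({i} : Finset (Fin N))}, V j.1) :=
    fun z j => z ⟨j.1, hiB j.2⟩ with hrI
  set qA := jointPMF p X A with hqA
  set qI := jointPMF p X {i} with hqI
  set qB := jointPMF p X B with hqB
  set F : (∀ j : {k // k ∈ B}, V j.1) → ℝ :=
    fun z => qA (rA z) * qI (rI z) / qB z with hF
  set S := Finset.univ.filter (fun ω => 0 < p ω) with hS
  have hSzero : ∀ ω, ω ∉ S → p ω = 0 := by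
    intro ω hω
    by_contra h
    exact hω (Finset.mem_filter.mpr ⟨Finset.mem_univ ω, lt_of_le_of_ne (hp ω) (Ne.symm h)⟩)
  have hSsum : ∑ ω ∈ S, p ω = 1 := by
    rw [← hp1]
    exact Finset.sum_subset (Finset.filter_subset _ _) (fun ω _ hω => hSzero ω hω)
  -- the product bound
  have hprod : ∑ z : (∀ j : {k // k ∈ B}, V j.1), qA (rA z) * qI (rI z) ≤ 1 := by
    set φ : (∀ j : {k // k ∈ B}, V j.1) →
        (∀ j : {k // k ∈ A}, V j.1) × (∀ j : {k // k ∈ ({i} : Finset (Fin N))}, V j.1) :=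
      fun z => (rA z, rI z) with hφ
    have hinj : Function.Injective φ := by
      intro z z' h
      funext j
      obtain ⟨j, hj⟩ := j
      rcases Finset.mem_insert.mp hj with hji | hjA
      · subst hji
        exact congrFun (congrArg Prod.snd h) ⟨j, Finset.mem_singleton_self j⟩
      · exact congrFun (congrArg Prod.fst h) ⟨j, hjA⟩
    calc ∑ z : (∀ j : {k // k ∈ B}, V j.1), qA (rA z) * qI (rI z)
        = ∑ w ∈ Finset.univ.image φ, qA w.1 * qI w.2 := by
          rw [Finset.sum_image (fun a _ b _ h => hinj h)]
      _ ≤ ∑ w : (∀ j : {k // k ∈ A}, V j.1) × (∀ j : {k // k ∈ ({i} : Finset (Fin N))}, V j.1),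
            qA w.1 * qI w.2 := by
          apply Finset.sum_le_sum_of_subset_of_nonneg (Finset.subset_univ _)
          intro w _ _
          exact mul_nonneg (jointPMF_nonneg p hp X A w.1) (jointPMF_nonneg p hp X {i} w.2)
      _ = (∑ a, qA a) * (∑ b, qI b) := by
          rw [Finset.sum_mul_sum, Fintype.sum_prod_type]
      _ = 1 := by rw [jointPMF_sum_one p hp1, jointPMF_sum_one p hp1, mul_one]
  -- expectation of F is at most 1
  have hEF : ∑ ω ∈ S, p ω * F (resMap X B ω) ≤ 1 := by
    rw [← Finset.sum_fiberwise S (resMap X B) (fun ω => p ω * F (resMap X B ω))]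
    refine le_trans (Finset.sum_le_sum (fun z _ => ?_)) hprod
    have hrw : ∑ ω ∈ S.filter (fun ω => resMap X B ω = z), p ω * F (resMap X B ω)
        = (∑ ω ∈ S.filter (fun ω => resMap X B ω = z), p ω) * F z := by
      rw [Finset.sum_mul]
      exact Finset.sum_congr rfl fun ω hω => by rw [(Finset.mem_filter.mp hω).2]
    rw [hrw]
    set c := ∑ ω ∈ S.filter (fun ω => resMap X B ω = z), p ω with hc
    have hc0 : 0 ≤ c := Finset.sum_nonneg fun ω _ => hp ω
    have hcq : c ≤ qB z := by
      rw [hqB, filter_eq_resMap]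
      apply Finset.sum_le_sum_of_subset_of_nonneg
      · intro ω hω
        exact Finset.mem_filter.mpr ⟨Finset.mem_univ ω, (Finset.mem_filter.mp hω).2⟩
      · intro ω _ _; exact hp ω
    have hGnn : 0 ≤ qA (rA z) * qI (rI z) :=
      mul_nonneg (jointPMF_nonneg p hp X A _) (jointPMF_nonneg p hp X {i} _)
    rcases eq_or_lt_of_le (le_trans hc0 hcq) with hqz | hqz
    · have : c = 0 := le_antisymm (hqz ▸ hcq) hc0
      rw [this, zero_mul]
      exact hGnn
    · have hFz : F z = qA (rA z) * qI (rI z) / qB z := rfl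
      rw [hFz]
      calc c * (qA (rA z) * qI (rI z) / qB z)
          ≤ qB z * (qA (rA z) * qI (rI z) / qB z) :=
            mul_le_mul_of_nonneg_right hcq (div_nonneg hGnn (le_of_lt hqz))
        _ = qA (rA z) * qI (rI z) := mul_div_cancel₀ _ (ne_of_gt hqz)
  -- pointwise log bound
  have hterm : ∀ ω ∈ S,
      p ω * Real.log (qA (resMap X A ω)) + p ω * Real.log (qI (resMap X {i} ω))
        - p ω * Real.log (qB (resMap X B ω)) ≤ p ω * (F (resMap X B ω) - 1) := by
    intro ω hω
    have hpω : 0 < p ω := (Finset.mem_filter.mp hω).2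
    have hA0 : 0 < qA (resMap X A ω) := lt_of_lt_of_le hpω (le_jointPMF p hp X A ω)
    have hI0 : 0 < qI (resMap X {i} ω) := lt_of_lt_of_le hpω (le_jointPMF p hp X {i} ω)
    have hB0 : 0 < qB (resMap X B ω) := lt_of_lt_of_le hpω (le_jointPMF p hp X B ω)
    have hres : F (resMap X B ω)
        = qA (resMap X A ω) * qI (resMap X {i} ω) / qB (resMap X B ω) := rfl
    have hlog : Real.log (qA (resMap X A ω)) + Real.log (qI (resMap X {i} ω))
        - Real.log (qB (resMap X B ω))
        = Real.log (qA (resMap X A ω) * qI (resMap X {i} ω) / qB (resMap X B ω)) := by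
      rw [Real.log_div (by positivity) (ne_of_gt hB0), Real.log_mul (ne_of_gt hA0) (ne_of_gt hI0)]
    have hle : Real.log (qA (resMap X A ω) * qI (resMap X {i} ω) / qB (resMap X B ω))
        ≤ qA (resMap X A ω) * qI (resMap X {i} ω) / qB (resMap X B ω) - 1 :=
      Real.log_le_sub_one_of_pos (by positivity)
    calc p ω * Real.log (qA (resMap X A ω)) + p ω * Real.log (qI (resMap X {i} ω))
          - p ω * Real.log (qB (resMap X B ω))
        = p ω * (Real.log (qA (resMap X A ω)) + Real.log (qI (resMap X {i} ω))
            - Real.log (qB (resMap X B ω))) := by ring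
      _ = p ω * Real.log (qA (resMap X A ω) * qI (resMap X {i} ω) / qB (resMap X B ω)) := by
          rw [hlog]
      _ ≤ p ω * (qA (resMap X A ω) * qI (resMap X {i} ω) / qB (resMap X B ω) - 1) :=
          mul_le_mul_of_nonneg_left hle (le_of_lt hpω)
      _ = p ω * (F (resMap X B ω) - 1) := by rw [hres]
  -- assemble
  have hsum : ∑ ω, (p ω * Real.log (qA (resMap X A ω)) + p ω * Real.log (qI (resMap X {i} ω))
      - p ω * Real.log (qB (resMap X B ω))) ≤ 0 := by
    rw [← Finset.sum_subset (Finset.filter_subset (fun ω => 0 < p ω) Finset.univ)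
      (fun ω _ hω => by rw [hSzero ω hω]; ring)]
    calc ∑ ω ∈ S, (p ω * Real.log (qA (resMap X A ω)) + p ω * Real.log (qI (resMap X {i} ω))
          - p ω * Real.log (qB (resMap X B ω)))
        ≤ ∑ ω ∈ S, p ω * (F (resMap X B ω) - 1) := Finset.sum_le_sum hterm
      _ = (∑ ω ∈ S, p ω * F (resMap X B ω)) - ∑ ω ∈ S, p ω := by
          rw [← Finset.sum_sub_distrib]
          exact Finset.sum_congr rfl fun ω _ => by ring
      _ ≤ 1 - 1 := by rw [hSsum]; exact sub_le_sub_right hEF 1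
      _ = 0 := by ring
  rw [jointEntropy_eq p X A, jointEntropy_eq p X {i}, jointEntropy_eq p X B]
  rw [Finset.sum_sub_distrib, Finset.sum_add_distrib] at hsum
  rw [← hqA, ← hqI, ← hqB]
  linarith

/-- With total correlation as value function, Shapley values are nonnegative and equal
zero if and only if the variable is non-correlated with any subset of the features. -/
theorem shapleyTC_nonneg_and_eq_zero_iff
    (p : Ω → ℝ) (hp : ∀ ω, 0 ≤ p ω) (hp1 : ∑ ω, p ω = 1)
    (X : ∀ i, Ω → V i) (i : Fin N) :
    0 ≤ shapleyTC p X i ∧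
      (shapleyTC p X i = 0 ↔
        ∀ A ⊆ Finset.univ.erase i,
          jointEntropy p X A + jointEntropy p X {i} = jointEntropy p X (insert i A)) := by
  have hN : 0 < N := i.pos
  have hterm : ∀ A ∈ (Finset.univ.erase i).powerset,
      0 ≤ jointEntropy p X A + jointEntropy p X {i} - jointEntropy p X (insert i A) := by
    intro A hA
    have hA' : A ⊆ Finset.univ.erase i := Finset.mem_powerset.mp hA
    have hiA : i ∉ A := fun h => (Finset.mem_erase.mp (hA' h)).1 rfl
    linarith [jointEntropy_subadd p hp hp1 X i A hiA]
  have hcoef : ∀ A ∈ (Finset.univ.erase i).powerset,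
      0 < (1 : ℝ) / (N * (N - 1).choose A.card) := by
    intro A hA
    have hA' : A ⊆ Finset.univ.erase i := Finset.mem_powerset.mp hA
    have hcard : A.card ≤ N - 1 := by
      have := Finset.card_le_card hA'
      rwa [Finset.card_erase_of_mem (Finset.mem_univ i), Finset.card_univ,
        Fintype.card_fin] at this
    have hch : 0 < (N - 1).choose A.card := Nat.choose_pos hcard
    apply div_pos one_pos
    apply mul_pos
    · exact_mod_cast hN
    · exact_mod_cast hch
  have hnn : ∀ A ∈ (Finset.univ.erase i).powerset,
      0 ≤ ((1 : ℝ) / (N * (N - 1).choose A.card)) *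
        (jointEntropy p X A + jointEntropy p X {i} - jointEntropy p X (insert i A)) :=
    fun A hA => mul_nonneg (le_of_lt (hcoef A hA)) (hterm A hA)
  refine ⟨Finset.sum_nonneg hnn, ?_⟩
  constructor
  · intro h A hA
    have h0 := (Finset.sum_eq_zero_iff_of_nonneg hnn).mp h A (Finset.mem_powerset.mpr hA)
    rcases mul_eq_zero.mp h0 with hc | ht
    · exact absurd hc (ne_of_gt (hcoef A (Finset.mem_powerset.mpr hA)))
    · linarith
  · intro h
    apply Finset.sum_eq_zero
    intro A hA
    have := h A (Finset.mem_powerset.mp hA)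
    have ht : jointEntropy p X A + jointEntropy p X {i} - jointEntropy p X (insert i A) = 0 := by
      linarith
    show ((1 : ℝ) / (N * (N - 1).choose A.card)) * _ = 0
    rw [ht, mul_zero]
end

section
/- Let Ω be a finite sample space with probability mass function p, and let F = {X_1, …, X_N} be random variables on Ω taking values in finite sets. Suppose B ⊂ F satisfies: (1) for all X_j ∉ B and all A ⊆ F \ {X_j}, H(A) + H(X_j) = H(A ∪ {X_j}); and (2) for all X_i ∈ B and all A ⊆ F \ {X_i}, H(A) + H(X_i) ≥ H(A ∪ {X_i}). Then the Shapley values with respect to the total correlation value function satisfy φ(X_i) ≥ φ(X_j) for all X_i ∈ B and all X_j ∉ B, where φ(X) = ∑_{A ⊆ F \ {X}} (1 / (N · binom(N−1, |A|))) · (H(A) + H(X) − H(A ∪ {X})). -/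
open Finset

variable {Ω : Type*} [Fintype Ω] {N : ℕ} {V : Fin N → Type*}
  [∀ i, Fintype (V i)] [∀ i, DecidableEq (V i)]

/-- If every variable outside `B` has vanishing marginal contributions (in entropy
terms) and every variable in `B` has nonnegative marginal contributions, then the
Shapley values with respect to total correlation of variables in `B` dominate those of
variables outside `B`. -/
theorem shapleyTC_ge_of_null_outside
    (p : Ω → ℝ) (hp : ∀ ω, 0 ≤ p ω) (hp1 : ∑ ω, p ω = 1)
    (X : ∀ i, Ω → V i) (B : Finset (Fin N)) (hB : B ⊂ Finset.univ)
    (h_null : ∀ j ∉ B, ∀ A ⊆ Finset.univ.erase j,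
      jointEntropy p X A + jointEntropy p X {j} = jointEntropy p X (insert j A))
    (h_nonneg : ∀ i ∈ B, ∀ A ⊆ Finset.univ.erase i,
      jointEntropy p X (insert i A) ≤ jointEntropy p X A + jointEntropy p X {i}) :
    ∀ i ∈ B, ∀ j ∉ B, shapleyTC p X j ≤ shapleyTC p X i := by
  intro i hi j hj
  have hj0 : shapleyTC p X j = 0 := by
    unfold shapleyTC
    apply Finset.sum_eq_zero
    intro A hA
    rw [h_null j hj A (Finset.mem_powerset.mp hA)]
    ring
  rw [hj0]
  unfold shapleyTC
  apply Finset.sum_nonneg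
  intro A hA
  apply mul_nonneg
  · positivity
  · have := h_nonneg i hi A (Finset.mem_powerset.mp hA)
    linarith
end
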